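/- If Γ is a minimally connected prime graph that is not a minimal prime graph, then Γ is isomorphic to a complete bridge graph B_{m,n} for some m ≥ n with either m ≥ n > 1, or m ∈ {1,2} and n = 1. -/

import Mathlib

open SimpleGraph

def bridgeAdj (m n : ℕ) : (Fin m ⊕ Fin n) → (Fin m ⊕ Fin n) → Prop
  | Sum.inl i, Sum.inl j => i ≠ j
  | Sum.inr i, Sum.inr j => i ≠ j
  | Sum.inl i, Sum.inr j => i.val = 0 ∧ j.val = 0
  | Sum.inr i, Sum.inl j => i.val = 0 ∧ j.val = 0

/-- The complete bridge graph `B_{m,n}`: two disjoint complete graphs on `m` and `n`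
vertices respectively, joined by exactly one edge (the bridge). -/
def completeBridgeGraph (m n : ℕ) : SimpleGraph (Fin m ⊕ Fin n) where
  Adj := bridgeAdj m n
  symm := by
    constructor; rintro (a | a) (b | b) h <;> simp_all [bridgeAdj] <;> tauto
  loopless := by
    constructor; rintro (a | a) h <;> simp_all [bridgeAdj]

/-- A minimally connected prime graph (MCPG). -/
def IsMCPG {V : Type} [Fintype V] (Γ : SimpleGraph V) : Prop :=
  2 ≤ Fintype.card V ∧ Γ.Connected ∧ Γᶜ.CliqueFree 3 ∧ Γᶜ.Colorable 3 ∧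
    ∀ e ∈ Γ.edgeSet,
      ¬((Γ.deleteEdges {e}).Connected ∧ (Γ.deleteEdges {e})ᶜ.CliqueFree 3 ∧
        (Γ.deleteEdges {e})ᶜ.Colorable 3)

/-- A minimal prime graph (MPG). -/
def IsMPG {V : Type} [Fintype V] (Γ : SimpleGraph V) : Prop :=
  2 ≤ Fintype.card V ∧ Γ.Connected ∧ Γᶜ.CliqueFree 3 ∧ Γᶜ.Colorable 3 ∧
    ∀ e ∈ Γ.edgeSet,
      ¬((Γ.deleteEdges {e})ᶜ.CliqueFree 3 ∧ (Γ.deleteEdges {e})ᶜ.Colorable 3)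

/-- A possibly disconnected minimal prime graph (PDMPG). -/
def IsPDMPG {V : Type} [Fintype V] (Γ : SimpleGraph V) : Prop :=
  Γᶜ.CliqueFree 3 ∧ Γᶜ.Colorable 3 ∧
    ∀ e ∈ Γ.edgeSet,
      ¬((Γ.deleteEdges {e})ᶜ.CliqueFree 3 ∧ (Γ.deleteEdges {e})ᶜ.Colorable 3)

/-!
Some edge `ab` can be deleted keeping the complement triangle-free and 3-colourable, so by
minimal connectedness it is a bridge; let `A ∋ a` and `B ∋ b` be its two sides. Two
non-adjacent vertices of `A` together with `b` (or of `B` together with `a`) would span a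
triangle in the complement of `Γ - ab`, so both sides are cliques and `Γ ≅ B_{|A|,|B|}`.
If `B = {b}` and `|A| ≥ 3`, deleting an edge `ay` inside `A` keeps the graph connected and
makes its complement bipartite with sides `{a, b}` and `A \ {a}`, contradicting minimality.
-/

namespace SimpleGraph

variable {V W : Type*}

theorem adj_of_not_reachable_of_compl_cliqueFree {G : SimpleGraph V} (h : Gᶜ.CliqueFree 3)
    {x y z : V} (hxy : x ≠ y) (hxz : ¬G.Reachable x z) (hyz : ¬G.Reachable y z) :
    G.Adj x y := by
  classical
  by_contra hn
  have compl_adj_of_not_reachable {u : V} (hu : ¬G.Reachable u z) : Gᶜ.Adj u z :=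
    (compl_adj _ _ _).2 ⟨fun e => hu (e ▸ Reachable.refl _), fun e => hu e.reachable⟩
  exact h {x, y, z} (is3Clique_triple_iff.2
    ⟨(compl_adj _ _ _).2 ⟨hxy, hn⟩, compl_adj_of_not_reachable hxz, compl_adj_of_not_reachable hyz⟩)

/-- `G` is the complete bridge graph with cliques `{x | P x}` and `{x | ¬ P x}` and bridge
`s(a, b)`. -/
def IsCompleteBridge (G : SimpleGraph V) (P : V → Prop) (a b : V) : Prop :=
  P a ∧ ¬ P b ∧ ∀ x y, G.Adj x y ↔ (x ≠ y ∧ (P x ↔ P y)) ∨ s(x, y) = s(a, b)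

namespace IsCompleteBridge

variable {G : SimpleGraph V} {P : V → Prop} {a b : V}

theorem symm (h : G.IsCompleteBridge P a b) : G.IsCompleteBridge (¬ P ·) b a := by
  obtain ⟨ha, hb, hadj⟩ := h
  refine ⟨hb, not_not_intro ha, fun x y => ?_⟩
  rw [hadj, Sym2.eq_swap (a := b), not_iff_not]

theorem adj (h : G.IsCompleteBridge P a b) : G.Adj a b :=
  (h.2.2 a b).2 (Or.inr rfl)

theorem adj_of_ne (h : G.IsCompleteBridge P a b) {x y : V} (hxy : x ≠ y) (hx : P x) (hy : P y) :
    G.Adj x y :=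
  (h.2.2 x y).2 (Or.inl ⟨hxy, iff_of_true hx hy⟩)

theorem nonempty_iso {H : SimpleGraph W} {Q : W → Prop} (hG : G.IsCompleteBridge P a b)
    (f : V ≃ W) (hH : H.IsCompleteBridge Q (f a) (f b)) (hPQ : ∀ x, P x ↔ Q (f x)) :
    Nonempty (G ≃g H) :=
  ⟨⟨f, fun {x y} => by
    rw [hH.2.2, hG.2.2, hPQ x, hPQ y, f.injective.ne_iff, ← Sym2.map_mk, ← Sym2.map_mk,
      (Sym2.map.injective f.injective).eq_iff]⟩⟩

end IsCompleteBridge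

theorem isCompleteBridge_of_not_reachable_deleteEdges {G : SimpleGraph V} {a b : V}
    (hab : G.Adj a b)
    (hcf : (G.deleteEdges {s(a, b)})ᶜ.CliqueFree 3)
    (hbr : ¬ (G.deleteEdges {s(a, b)}).Reachable a b) :
    G.IsCompleteBridge ((G.deleteEdges {s(a, b)}).Reachable a) a b := by
  set G' := G.deleteEdges {s(a, b)}
  have same_side {x y : V} (hxy : x ≠ y) (hiff : G'.Reachable a x ↔ G'.Reachable a y) :
      G.Adj x y := by
    refine deleteEdges_le {s(a, b)} ?_
    by_cases hx : G'.Reachable a x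
    · exact adj_of_not_reachable_of_compl_cliqueFree hcf hxy (fun r => hbr (hx.trans r))
        (fun r => hbr ((hiff.1 hx).trans r))
    · exact adj_of_not_reachable_of_compl_cliqueFree hcf hxy (fun r => hx r.symm)
        (fun r => hx (hiff.2 r.symm))
  refine ⟨Reachable.refl a, hbr, fun x y => ⟨fun h => ?_, ?_⟩⟩
  · by_cases he : s(x, y) = s(a, b)
    · exact Or.inr he
    · have h' : G'.Adj x y := deleteEdges_adj.2 ⟨h, he⟩
      exact Or.inl ⟨h.ne, ⟨fun r => r.trans h'.reachable, fun r => r.trans h'.symm.reachable⟩⟩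
  · rintro (⟨hxy, hiff⟩ | he)
    · exact same_side hxy hiff
    · rw [← mem_edgeSet, he]
      exact hab

end SimpleGraph

theorem Fintype.exists_equiv_fin_apply_eq_zero {α : Type*} [Fintype α] (x : α) :
    ∃ e : α ≃ Fin (Fintype.card α), e x = ⟨0, Fintype.card_pos_iff.2 ⟨x⟩⟩ :=
  ⟨(Fintype.equivFin α).trans (Equiv.swap _ _), Equiv.swap_apply_left _ _⟩

theorem isCompleteBridge_completeBridgeGraph {m n : ℕ} (hm : 0 < m) (hn : 0 < n) :
    (completeBridgeGraph m n).IsCompleteBridge (fun u => u.isLeft) (.inl ⟨0, hm⟩)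
      (.inr ⟨0, hn⟩) := by
  refine ⟨rfl, by simp, ?_⟩
  rintro (i | i) (j | j) <;> simp [completeBridgeGraph, bridgeAdj, Fin.ext_iff]

namespace SimpleGraph.IsCompleteBridge

theorem nonempty_iso_completeBridgeGraph {V : Type*} [Fintype V] {G : SimpleGraph V}
    {P : V → Prop} [DecidablePred P] {a b : V} (h : G.IsCompleteBridge P a b) :
    Nonempty (G ≃g
      completeBridgeGraph (Fintype.card {x // P x}) (Fintype.card {x // ¬ P x})) := by
  obtain ⟨e₁, he₁⟩ := Fintype.exists_equiv_fin_apply_eq_zero (⟨a, h.1⟩ : {x // P x})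
  obtain ⟨e₂, he₂⟩ := Fintype.exists_equiv_fin_apply_eq_zero (⟨b, h.2.1⟩ : {x // ¬ P x})
  let f := (Equiv.sumCompl P).symm.trans (Equiv.sumCongr e₁ e₂)
  have hfa : f a = .inl (e₁ ⟨a, h.1⟩) := by simp [f, Equiv.sumCompl_symm_apply_of_pos h.1]
  have hfb : f b = .inr (e₂ ⟨b, h.2.1⟩) := by simp [f, Equiv.sumCompl_symm_apply_of_neg h.2.1]
  refine h.nonempty_iso (Q := fun u => u.isLeft) f ?_ fun x => ?_
  · rw [hfa, hfb, he₁, he₂]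
    exact isCompleteBridge_completeBridgeGraph _ _
  by_cases hx : P x <;>
    simp [f, hx, Equiv.sumCompl_symm_apply_of_pos, Equiv.sumCompl_symm_apply_of_neg]

theorem card_le_two {V : Type} [Fintype V] {Γ : SimpleGraph V}
    {P : V → Prop} [DecidablePred P] {a b : V} (h : Γ.IsCompleteBridge P a b) (hΓ : IsMCPG Γ)
    (hb : ∀ x, ¬ P x → x = b) : Fintype.card {x // P x} ≤ 2 := by
  classical
  by_contra! hcard
  have hcard' : 1 < (({x | P x} : Finset V).erase a).card := by
    rw [Fintype.card_subtype] at hcard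
    rw [Finset.card_erase_of_mem (by simpa using h.1)]
    omega
  obtain ⟨y, hy, z, hz, hyz⟩ := Finset.one_lt_card.1 hcard'
  simp only [Finset.mem_erase, Finset.mem_filter, Finset.mem_univ, true_and] at hy hz
  set Γ' := Γ.deleteEdges {s(a, y)}
  have hΓ' (u v : V) : Γ'.Adj u v ↔ Γ.Adj u v ∧ s(u, v) ≠ s(a, y) := deleteEdges_adj
  have adj_a (w : V) (hwa : w ≠ a) (hwy : w ≠ y) : Γ'.Adj a w := by
    refine (hΓ' a w).2 ⟨?_, by simp [hwy, hy.1.symm]⟩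
    by_cases hw : P w
    · exact h.adj_of_ne hwa.symm h.1 hw
    · exact hb w hw ▸ h.adj
  have hconn : Γ'.Connected := by
    refine (connected_iff_exists_forall_reachable _).2 ⟨a, fun w => ?_⟩
    by_cases hwa : w = a
    · rw [hwa]
    by_cases hwy : w = y
    · have hzy : Γ'.Adj z y := (hΓ' z y).2 ⟨h.adj_of_ne hyz.symm hz.2 hy.2, by simp [hz.1, hy.1]⟩
      exact hwy ▸ (adj_a z hz.1 hyz.symm).reachable.trans hzy.reachable
    exact (adj_a w hwa hwy).reachable
  have hcol : Γ'ᶜ.Colorable 2 := by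
    refine ⟨Coloring.mk (fun v => if P v ∧ v ≠ a then 0 else 1) fun {u v} huv => ?_⟩
    rw [compl_adj, hΓ', h.2.2] at huv
    grind [Sym2.eq_iff, h.1, h.2.1]
  exact hΓ.2.2.2.2 _ (h.adj_of_ne hy.1.symm h.1 hy.2)
    ⟨hconn, hcol.cliqueFree (by norm_num), hcol.mono (by norm_num)⟩

theorem exists_iso {V : Type} [Fintype V] {Γ : SimpleGraph V}
    {P : V → Prop} [DecidablePred P] {a b : V} (h : Γ.IsCompleteBridge P a b) (hΓ : IsMCPG Γ)
    (hle : Fintype.card {x // ¬ P x} ≤ Fintype.card {x // P x}) :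
    ∃ m n : ℕ, n ≤ m ∧ (1 < n ∨ ((m = 1 ∨ m = 2) ∧ n = 1)) ∧
      Nonempty (Γ ≃g completeBridgeGraph m n) := by
  refine ⟨_, _, hle, ?_, h.nonempty_iso_completeBridgeGraph⟩
  have hn : 0 < Fintype.card {x // ¬ P x} := Fintype.card_pos_iff.2 ⟨⟨b, h.2.1⟩⟩
  rcases (by omega : 1 < Fintype.card {x // ¬ P x} ∨ Fintype.card {x // ¬ P x} = 1) with hn | hn
  · exact Or.inl hn
  have hb (x : V) (hx : ¬ P x) : x = b :=
    congrArg Subtype.val (Fintype.card_le_one_iff.1 hn.le ⟨x, hx⟩ ⟨b, h.2.1⟩)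
  have := h.card_le_two hΓ hb
  omega

end SimpleGraph.IsCompleteBridge

theorem IsMCPG.exists_isCompleteBridge {V : Type} [Fintype V] {Γ : SimpleGraph V}
    (hΓ : IsMCPG Γ) (hnot : ¬ IsMPG Γ) : ∃ P a b, Γ.IsCompleteBridge P a b := by
  obtain ⟨hcard, hconn, hcf, hcol, hmin⟩ := hΓ
  obtain ⟨e, he, hcf', hcol'⟩ : ∃ e ∈ Γ.edgeSet,
      (Γ.deleteEdges {e})ᶜ.CliqueFree 3 ∧ (Γ.deleteEdges {e})ᶜ.Colorable 3 := by
    by_contra! h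
    exact hnot ⟨hcard, hconn, hcf, hcol, fun e he hc => h e he hc.1 hc.2⟩
  induction e using Sym2.ind with
  | _ a b =>
    have hbr : ¬ (Γ.deleteEdges {s(a, b)}).Reachable a b := fun hr =>
      hmin _ he ⟨hconn.connected_delete_edge_of_not_isBridge (by rwa [isBridge_iff, not_not]),
        hcf', hcol'⟩
    exact ⟨_, a, b, isCompleteBridge_of_not_reachable_deleteEdges he hcf' hbr⟩

/-- If `Γ` is a minimally connected prime graph that is not a minimal prime graph, then
`Γ` is isomorphic to a complete bridge graph `B_{m,n}` for some `m ≥ n` with either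
`m ≥ n > 1`, or `m ∈ {1,2}` and `n = 1`. -/
theorem stmt1 {V : Type} [Fintype V] (Γ : SimpleGraph V)
    (hΓ : IsMCPG Γ) (hnot : ¬ IsMPG Γ) :
    ∃ m n : ℕ, n ≤ m ∧ (1 < n ∨ ((m = 1 ∨ m = 2) ∧ n = 1)) ∧
      Nonempty (Γ ≃g completeBridgeGraph m n) := by
  classical
  obtain ⟨P, a, b, h⟩ := hΓ.exists_isCompleteBridge hnot
  rcases le_total (Fintype.card {x // ¬ P x}) (Fintype.card {x // P x}) with hle | hle
  · exact h.exists_iso hΓ hle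
  · exact h.symm.exists_iso hΓ (by simpa using hle)
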